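/- arXiv:1803.10373 — 3 statements merged into one kernel-verified Lean document; each statement's English description precedes it below -/
import Mathlib

section
/- Let q be a positive integer, d ≥ 2, H a positive real with H ≤ q^(2/(d²+d+2)), and a₁, …, a_d integers. Then there exists a nonzero integer vector (z, w₁, …, w_d) ∈ ℤ^(d+1) and an integer n with n ≡ z (mod q), a_i·n ≡ w_i (mod q) for 1 ≤ i ≤ d, satisfying |z| ≤ q/H and |w_i| ≤ q/H^i for all i. -/
/-!
The vectors `(n, a₁ n + q k₁, …, a_d n + q k_d)` with `n, kᵢ ∈ ℤ` form the image of
`ℤ^(d+1)` under a lower triangular integer matrix with diagonal `(1, q, …, q)`, a lattice of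
covolume `q^d`.
The box `|z| ≤ q/H`, `|wᵢ| ≤ q/Hⁱ` has volume `2^(d+1) q^(d+1) / H^S` with
`S = 1 + (1 + 2 + ⋯ + d) = (d² + d + 2)/2`, and `H^S ≤ q` is exactly the hypothesis on `H`,
so Minkowski's first theorem yields a nonzero lattice point in the box.
-/

open MeasureTheory Module Submodule Matrix

theorem Matrix.exists_ne_zero_abs_mulVec_le {ι : Type*} [Fintype ι] [DecidableEq ι] [Nonempty ι]
    (M : Matrix ι ι ℤ) (hM : M.det ≠ 0) (r : ι → ℝ) (hr : 0 ≤ r)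
    (hdet : |(M.det : ℝ)| ≤ ∏ i, r i) :
    ∃ c : ι → ℤ, c ≠ 0 ∧ ∀ j, |((M *ᵥ c) j : ℝ)| ≤ r j := by
  set N : Matrix ι ι ℝ := M.map (↑)
  have hN : N.det = M.det := (Int.cast_det M).symm
  let b : Basis ι ℝ (ι → ℝ) := basisOfLinearIndependentOfCardEqFinrank
    (linearIndependent_cols_of_det_ne_zero (by rw [hN]; exact_mod_cast hM)) (by simp)
  have hb : ⇑b = N.col := coe_basisOfLinearIndependentOfCardEqFinrank _ _
  have hvol : volume (ZSpan.fundamentalDomain b) * 2 ^ finrank ℝ (ι → ℝ)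
      ≤ volume (Set.Icc (-r) r) := by
    rw [ZSpan.volume_fundamentalDomain, Real.volume_Icc_pi, hb]
    change ENNReal.ofReal |Nᵀ.det| * _ ≤ _
    have hbox : ∏ i, ENNReal.ofReal (r i - (-r) i)
        = ENNReal.ofReal (∏ i, r i) * 2 ^ Fintype.card ι := by
      simp_rw [Pi.neg_apply, sub_neg_eq_add, ← two_mul, ENNReal.ofReal_mul zero_le_two,
        Finset.prod_mul_distrib, ENNReal.ofReal_prod_of_nonneg fun i _ => hr i]
      simp [mul_comm]
    rw [det_transpose, hN, finrank_fintype_fun_eq_card, hbox]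
    gcongr
  have : Countable (span ℤ (Set.range b)).toAddSubgroup :=
    inferInstanceAs (Countable (span ℤ (Set.range b)))
  obtain ⟨⟨x, hx⟩, hx0, hxr⟩ := exists_ne_zero_mem_lattice_of_measure_mul_two_pow_le_measure
    (ZSpan.isAddFundamentalDomain' b volume)
    (fun x (hx : x ∈ Set.Icc (-r) r) => ⟨neg_le_neg hx.2, neg_le.1 hx.1⟩)
    (convex_Icc _ _) isCompact_Icc hvol
  obtain ⟨c, rfl⟩ := (mem_span_range_iff_exists_fun ℤ).mp hx
  have hNc : ∑ i, c i • b i = N *ᵥ (Int.cast ∘ c) := by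
    ext j
    simp [hb, mulVec, dotProduct, Finset.sum_apply, mul_comm, N, col]
  refine ⟨c, ?_, fun j => ?_⟩
  · rintro rfl
    simp at hx0
  · have hcast : ((M *ᵥ c) j : ℝ) = (N *ᵥ (Int.cast ∘ c)) j :=
      (Int.castRingHom ℝ).map_mulVec M c j
    rw [hcast, ← hNc]
    exact abs_le.2 ⟨hxr.1 j, hxr.2 j⟩

theorem two_mul_sum_max_one (d : ℕ) :
    2 * ∑ j : Fin (d + 1), max 1 (j : ℕ) = d ^ 2 + d + 2 := by
  induction d with
  | zero => simp
  | succ d ih =>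
    rw [Fin.sum_univ_castSucc]
    simp only [Fin.val_castSucc, Fin.val_last]
    rw [mul_add, ih, max_eq_right (by omega)]
    ring

theorem pow_sum_max_one_le {d : ℕ} {q H : ℝ} (hq : 0 ≤ q) (hH : 0 ≤ H)
    (hHq : H ≤ q ^ ((2 : ℝ) / ((d : ℝ) ^ 2 + d + 2))) :
    H ^ ∑ j : Fin (d + 1), max 1 (j : ℕ) ≤ q := by
  have hexp : (2 : ℝ) / ((d : ℝ) ^ 2 + d + 2)
      = ((∑ j : Fin (d + 1), max 1 (j : ℕ) : ℕ) : ℝ)⁻¹ := by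
    rw [inv_eq_one_div, div_eq_div_iff (by positivity) (by positivity), one_mul,
      ← Nat.cast_ofNat, ← Nat.cast_mul, two_mul_sum_max_one]
    push_cast
    ring
  rwa [hexp, Real.le_rpow_inv_iff_of_pos hH hq (by positivity), Real.rpow_natCast] at hHq

def multiplierMatrix (q : ℕ) (a : ℕ → ℤ) (d : ℕ) :
    Matrix (Fin (d + 1)) (Fin (d + 1)) ℤ :=
  Matrix.of fun j i =>
    if i = 0 then (if j = 0 then 1 else a j) else if j = i then q else 0

section multiplierMatrix

variable (q : ℕ) (a : ℕ → ℤ) {d : ℕ}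

theorem multiplierMatrix_det : (multiplierMatrix q a d).det = q ^ d := by
  rw [det_of_isLowerTriangular]
  · simp [Fin.prod_univ_succ, multiplierMatrix, Fin.succ_ne_zero]
  · intro j i (hji : j < i)
    simp [multiplierMatrix, Fin.ne_zero_of_lt hji, hji.ne]

theorem multiplierMatrix_mulVec_zero (c : Fin (d + 1) → ℤ) :
    (multiplierMatrix q a d *ᵥ c) 0 = c 0 := by
  simp [mulVec, dotProduct, multiplierMatrix, Fin.sum_univ_succ, (Fin.succ_ne_zero _).symm]

theorem multiplierMatrix_mulVec_of_ne_zero (c : Fin (d + 1) → ℤ) {j : Fin (d + 1)}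
    (hj : j ≠ 0) :
    (multiplierMatrix q a d *ᵥ c) j = a j * c 0 + q * c j := by
  obtain ⟨k, rfl⟩ := Fin.exists_succ_eq.2 hj
  simp [mulVec, dotProduct, multiplierMatrix, Fin.sum_univ_succ, Fin.succ_ne_zero]

theorem abs_det_multiplierMatrix_le {H : ℝ} (hH : 0 < H)
    (hHq : H ≤ (q : ℝ) ^ ((2 : ℝ) / ((d : ℝ) ^ 2 + d + 2))) :
    |((multiplierMatrix q a d).det : ℝ)|
      ≤ ∏ j : Fin (d + 1), (q : ℝ) / H ^ max 1 (j : ℕ) := by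
  have hS := pow_sum_max_one_le (Nat.cast_nonneg q) hH.le hHq
  rw [multiplierMatrix_det, Finset.prod_div_distrib, Finset.prod_const,
    Finset.prod_pow_eq_pow_sum, Finset.card_univ, Fintype.card_fin, le_div_iff₀ (by positivity)]
  push_cast
  rw [abs_of_nonneg (by positivity), pow_succ]
  gcongr

end multiplierMatrix

theorem exists_short_multiplier_vector_general
    (q : ℕ) (hq : 0 < q) (d : ℕ) (H : ℝ) (hH : 0 < H)
    (hHq : H ≤ (q : ℝ) ^ ((2 : ℝ) / ((d : ℝ) ^ 2 + d + 2))) (a : ℕ → ℤ) :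
    ∃ (z : ℤ) (w : ℕ → ℤ) (n : ℤ),
      ¬(z = 0 ∧ ∀ i, 1 ≤ i → i ≤ d → w i = 0) ∧
      n ≡ z [ZMOD (q : ℤ)] ∧
      (∀ i, 1 ≤ i → i ≤ d → a i * n ≡ w i [ZMOD (q : ℤ)]) ∧
      |(z : ℝ)| ≤ (q : ℝ) / H ∧
      ∀ i, 1 ≤ i → i ≤ d → |(w i : ℝ)| ≤ (q : ℝ) / H ^ i := by
  have hdet : (multiplierMatrix q a d).det ≠ 0 := by simp [multiplierMatrix_det, hq.ne']
  obtain ⟨c, hc, hbox⟩ := (multiplierMatrix q a d).exists_ne_zero_abs_mulVec_le hdet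
    (fun j => (q : ℝ) / H ^ max 1 (j : ℕ)) (fun j => by positivity)
    (abs_det_multiplierMatrix_le q a hH hHq)
  set v := multiplierMatrix q a d *ᵥ c with hv_def
  have hv : v ≠ 0 := fun h => hc (eq_zero_of_mulVec_eq_zero hdet h)
  have hw : ∀ i (hi : i < d + 1), Function.extend Fin.val v 0 i = v ⟨i, hi⟩ :=
    fun i hi => Fin.val_injective.extend_apply v 0 ⟨i, hi⟩
  refine ⟨v 0, Function.extend Fin.val v 0, c 0, ?_, ?_, ?_, ?_, ?_⟩
  · rintro ⟨hz, hzero⟩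
    refine hv (funext fun j => ?_)
    rcases eq_or_ne j 0 with rfl | hj
    · exact hz
    · simpa [hw j j.isLt] using hzero j (Fin.pos_iff_ne_zero.2 hj) (Nat.lt_succ_iff.1 j.isLt)
  · rw [hv_def, multiplierMatrix_mulVec_zero]
  · intro i hi1 hid
    rw [hw i (by omega), hv_def,
      multiplierMatrix_mulVec_of_ne_zero _ _ _ (Fin.pos_iff_ne_zero.1 hi1)]
    exact Int.modEq_add_fac_self.symm
  · simpa using hbox 0
  · intro i hi1 hid
    simpa [hw i (by omega), max_eq_right hi1] using hbox ⟨i, by omega⟩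

/-- Minkowski's first theorem applied to the multiplier lattice: if
`H ≤ q^(2/(d²+d+2))` then there is a nonzero vector `(z,w₁,…,w_d)` with
`n ≡ z`, `aᵢ n ≡ wᵢ (mod q)` and `|z| ≤ q/H`, `|wᵢ| ≤ q/Hⁱ`. -/
theorem exists_short_multiplier_vector
    (q : ℕ) (hq : 0 < q) (d : ℕ) (hd : 2 ≤ d) (H : ℝ) (hH : 0 < H)
    (hHq : H ≤ (q : ℝ) ^ ((2 : ℝ) / ((d : ℝ) ^ 2 + d + 2))) (a : ℕ → ℤ) :
    ∃ (z : ℤ) (w : ℕ → ℤ) (n : ℤ),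
      ¬(z = 0 ∧ ∀ i, 1 ≤ i → i ≤ d → w i = 0) ∧
      n ≡ z [ZMOD (q : ℤ)] ∧
      (∀ i, 1 ≤ i → i ≤ d → a i * n ≡ w i [ZMOD (q : ℤ)]) ∧
      |(z : ℝ)| ≤ (q : ℝ) / H ∧
      ∀ i, 1 ≤ i → i ≤ d → |(w i : ℝ)| ≤ (q : ℝ) / H ^ i :=
  exists_short_multiplier_vector_general q hq d H hH hHq a
end

section
/- Let q be a positive integer, f ∈ ℤ[X] of degree d ≥ 2 with leading coefficient coprime to q, and ℬ a cube (K, K+H] × (L, L+H]. Assuming the Bombieri–Pila bound (every absolutely irreducible integral plane curve of degree d ≥ 2 has at most H^{1/d + o(1)} integral points in a square of side H), if H ≤ q^{2/(d²+d+2)} then the number of pairs (x, y) ∈ ℬ ∩ ℤ² with y ≡ f(x) (mod q) is at most H^{1/d + o(1)}. -/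
open Finset MvPolynomial

section Aux

lemma aux_ncard_biUnion_le {α β : Type*} [DecidableEq β] (T : Finset β) (A : β → Set α) :
    (⋃ t ∈ T, A t).ncard ≤ ∑ t ∈ T, (A t).ncard := by
  classical
  induction T using Finset.induction with
  | empty => simp
  | @insert x s hx ih =>
    rw [Finset.sum_insert hx]
    have h : (⋃ t ∈ insert x s, A t) = A x ∪ ⋃ t ∈ s, A t := by
      simp [Set.biUnion_insert]
    rw [h]
    exact le_trans (Set.ncard_union_le _ _) (add_le_add le_rfl ih)

lemma aux_recenter (a : ℕ → ℤ) (n : ℕ) (K u : ℤ) :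
    ∑ i ∈ Finset.range n, a i * (K + u) ^ i
      = ∑ j ∈ Finset.range n,
          (∑ i ∈ Finset.range n, if j ≤ i then a i * (i.choose j) * K ^ (i - j) else 0) * u ^ j := by
  have h1 : ∀ i ∈ Finset.range n, a i * (K + u) ^ i
      = ∑ j ∈ Finset.range n, (if j ≤ i then a i * (i.choose j) * K ^ (i - j) * u ^ j else 0) := by
    intro i hi
    rw [add_comm K u, add_pow]
    rw [Finset.mul_sum]
    rw [← Finset.sum_subset (Finset.range_subset_range.2 (Nat.succ_le_of_lt (Finset.mem_range.1 hi)))]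
    · apply Finset.sum_congr rfl
      intro j hj
      have : j ≤ i := Nat.lt_succ_iff.1 (Finset.mem_range.1 hj)
      simp only [this, if_true]
      ring
    · intro j _ hj
      have : ¬ j ≤ i := by
        simpa [Nat.lt_succ_iff] using hj
      simp [this]
  rw [Finset.sum_congr rfl h1, Finset.sum_comm]
  apply Finset.sum_congr rfl
  intro j _
  rw [Finset.sum_mul]
  apply Finset.sum_congr rfl
  intro i _
  split <;> simp

lemma aux_pigeon (q m d : ℕ) (hm : 2 ≤ m) (b : ℕ → ℤ)
    (hmq : m ^ ((∑ i ∈ Finset.range d, (i + 1)) + 1) ≤ q) :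
    ∃ z : ℤ, 0 < z ∧ z * m ≤ q ∧ ∃ w : ℕ → ℤ,
      ∀ i ∈ Finset.Icc 1 d, w i ≡ z * b i [ZMOD (q : ℤ)] ∧ |w i| * (m : ℤ) ^ i < q := by
  set D := ∑ i ∈ Finset.range d, (i + 1) with hD
  have hq : 0 < q := lt_of_lt_of_le (by positivity) hmq
  have hqZ : (0 : ℤ) < q := by exact_mod_cast hq
  set φ : ℕ → (Fin d → ℕ) :=
    fun z i => (((z : ℤ) * b (i.1 + 1)) % q * (m : ℤ) ^ (i.1 + 1) / q).toNat with hφ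
  have hmaps : ∀ z ∈ Finset.range (m ^ D + 1),
      φ z ∈ Fintype.piFinset (fun i : Fin d => Finset.range (m ^ (i.1 + 1))) := by
    intro z _
    rw [Fintype.mem_piFinset]
    intro i
    rw [Finset.mem_range]
    have h0 : (0:ℤ) ≤ ((z : ℤ) * b (i.1 + 1)) % q := Int.emod_nonneg _ (by omega)
    have h1 : ((z : ℤ) * b (i.1 + 1)) % q < q := Int.emod_lt_of_pos _ hqZ
    have h2 : ((z : ℤ) * b (i.1 + 1)) % q * (m : ℤ) ^ (i.1 + 1) / q < (m : ℤ) ^ (i.1 + 1) := by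
      apply Int.ediv_lt_of_lt_mul hqZ
      calc ((z : ℤ) * b (i.1 + 1)) % q * (m : ℤ) ^ (i.1 + 1)
          < q * (m : ℤ) ^ (i.1 + 1) := by
            apply mul_lt_mul_of_pos_right h1 (by positivity)
        _ = (m : ℤ) ^ (i.1 + 1) * q := by ring
    have h3 : (0:ℤ) ≤ ((z : ℤ) * b (i.1 + 1)) % q * (m : ℤ) ^ (i.1 + 1) / q :=
      Int.ediv_nonneg (by positivity) (by omega)
    have hcast : ((m ^ (i.1 + 1) : ℕ) : ℤ) = (m : ℤ) ^ (i.1 + 1) := by push_cast; ring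
    show (((z : ℤ) * b (i.1 + 1)) % q * (m : ℤ) ^ (i.1 + 1) / q).toNat < m ^ (i.1 + 1)
    omega
  have hcard : (Fintype.piFinset (fun i : Fin d => Finset.range (m ^ (i.1 + 1)))).card
      < (Finset.range (m ^ D + 1)).card := by
    rw [Fintype.card_piFinset, Finset.card_range]
    simp only [Finset.card_range]
    rw [Finset.prod_pow_eq_pow_sum]
    have : ∑ i : Fin d, (i.1 + 1) = D := by
      rw [hD, ← Fin.sum_univ_eq_sum_range]
    rw [this]
    omega
  obtain ⟨x, hx, y, hy, hxy, hfeq⟩ :=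
    Finset.exists_ne_map_eq_of_card_lt_of_maps_to hcard hmaps
  have key : ∀ z1 z2 : ℕ, z1 < z2 → z2 ∈ Finset.range (m ^ D + 1) → φ z1 = φ z2 →
      ∃ z : ℤ, 0 < z ∧ z * m ≤ q ∧ ∃ w : ℕ → ℤ,
        ∀ i ∈ Finset.Icc 1 d, w i ≡ z * b i [ZMOD (q : ℤ)] ∧ |w i| * (m : ℤ) ^ i < q := by
    intro z1 z2 hlt hz2 heq
    refine ⟨(z2 : ℤ) - z1, sub_pos.2 (by exact_mod_cast hlt), ?_, ?_⟩
    · have hz2le : (z2 : ℤ) ≤ m ^ D := by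
        have := Finset.mem_range.1 hz2
        exact_mod_cast Nat.lt_succ_iff.1 (by omega)
      calc ((z2 : ℤ) - z1) * m ≤ (m:ℤ) ^ D * m := by
            apply mul_le_mul_of_nonneg_right (by omega) (by positivity)
        _ = (m:ℤ) ^ (D + 1) := by ring
        _ ≤ q := by exact_mod_cast hmq
    · refine ⟨fun i => ((z2 : ℤ) * b i) % q - ((z1 : ℤ) * b i) % q, ?_⟩
      intro i hi
      obtain ⟨hi1, hi2⟩ := Finset.mem_Icc.1 hi
      constructor
      · have e2 : ((z2 : ℤ) * b i) % q ≡ (z2 : ℤ) * b i [ZMOD (q:ℤ)] :=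
          Int.emod_emod_of_dvd _ dvd_rfl
        have e1 : ((z1 : ℤ) * b i) % q ≡ (z1 : ℤ) * b i [ZMOD (q:ℤ)] :=
          Int.emod_emod_of_dvd _ dvd_rfl
        have := e2.sub e1
        calc ((z2 : ℤ) * b i) % q - ((z1 : ℤ) * b i) % q
            ≡ (z2 : ℤ) * b i - (z1 : ℤ) * b i [ZMOD (q:ℤ)] := this
          _ = ((z2 : ℤ) - z1) * b i := by ring
      · set j : Fin d := ⟨i - 1, by omega⟩ with hj
        have hji : j.1 + 1 = i := by simp [hj]; omega
        have hfe := congrFun heq j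
        rw [hφ] at hfe
        simp only [hji] at hfe
        set r1 := ((z1 : ℤ) * b i) % q with hr1
        set r2 := ((z2 : ℤ) * b i) % q with hr2
        have h10 : 0 ≤ r1 := Int.emod_nonneg _ (by omega)
        have h20 : 0 ≤ r2 := Int.emod_nonneg _ (by omega)
        have hdiv : r1 * (m:ℤ) ^ i / q = r2 * (m:ℤ) ^ i / q := by
          have h1' : 0 ≤ r1 * (m:ℤ) ^ i / q := Int.ediv_nonneg (by positivity) (by omega)
          have h2' : 0 ≤ r2 * (m:ℤ) ^ i / q := Int.ediv_nonneg (by positivity) (by omega)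
          omega
        have key2 : r2 * (m:ℤ) ^ i - r1 * (m:ℤ) ^ i
            = r2 * (m:ℤ) ^ i % q - r1 * (m:ℤ) ^ i % q := by
          have a1 := Int.mul_ediv_add_emod (r1 * (m:ℤ) ^ i) q
          have a2 := Int.mul_ediv_add_emod (r2 * (m:ℤ) ^ i) q
          rw [hdiv] at a1
          omega
        have s10 : 0 ≤ r1 * (m:ℤ) ^ i % q := Int.emod_nonneg _ (by omega)
        have s1q : r1 * (m:ℤ) ^ i % q < q := Int.emod_lt_of_pos _ hqZ
        have s20 : 0 ≤ r2 * (m:ℤ) ^ i % q := Int.emod_nonneg _ (by omega)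
        have s2q : r2 * (m:ℤ) ^ i % q < q := Int.emod_lt_of_pos _ hqZ
        calc |r2 - r1| * (m:ℤ) ^ i = |(r2 - r1) * (m:ℤ)^i| := by
              rw [abs_mul, abs_of_nonneg (by positivity : (0:ℤ) ≤ (m:ℤ)^i)]
          _ = |r2 * (m:ℤ)^i - r1 * (m:ℤ)^i| := by ring_nf
          _ < q := by rw [key2]; rw [abs_lt]; omega
  rcases lt_or_gt_of_ne hxy with h | h
  · exact key x y h hy hfeq
  · exact key y x h hx hfeq.symm

noncomputable def curveP (w : ℕ → ℤ) (c z : ℤ) (d : ℕ) : MvPolynomial (Fin 2) ℤ :=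
  (∑ j ∈ Finset.Icc 1 d, C (w j) * (X 0) ^ j) + C c - C z * X 1

lemma curveP_eval (w : ℕ → ℤ) (c z : ℤ) (d : ℕ) (u v : ℤ) :
    MvPolynomial.eval (fun i : Fin 2 => if i = 0 then u else v) (curveP w c z d)
      = (∑ j ∈ Finset.Icc 1 d, w j * u ^ j) + c - z * v := by
  simp [curveP]

lemma curveP_totalDegree (w : ℕ → ℤ) (c z : ℤ) (d : ℕ) (hd : 2 ≤ d) (hw : w d ≠ 0) :
    (curveP w c z d).totalDegree = d := by
  apply le_antisymm
  · apply le_trans (totalDegree_sub _ _)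
    apply max_le
    · apply le_trans (totalDegree_add _ _)
      apply max_le
      · apply totalDegree_finsetSum_le
        intro j hj
        refine le_trans (totalDegree_mul _ _) ?_
        have e1 : (C (w j) : MvPolynomial (Fin 2) ℤ).totalDegree = 0 := totalDegree_C _
        have e2 : ((X (0 : Fin 2) : MvPolynomial (Fin 2) ℤ) ^ j).totalDegree ≤ j := by
          refine le_trans (totalDegree_pow _ _) ?_
          rw [totalDegree_X]
          omega
        have := (Finset.mem_Icc.1 hj).2
        omega
      · exact (totalDegree_C c).le.trans (Nat.zero_le d)
    · refine le_trans (totalDegree_mul _ _) ?_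
      rw [totalDegree_C, totalDegree_X]
      omega
  · have hmem : Finsupp.single (0 : Fin 2) d ∈ (curveP w c z d).support := ?_
    · have := MvPolynomial.le_totalDegree hmem
      simpa using this
    rw [MvPolynomial.mem_support_iff]
    classical
    have h1 : MvPolynomial.coeff (Finsupp.single 0 d)
        (∑ j ∈ Finset.Icc 1 d, C (w j) * (X (0 : Fin 2)) ^ j) = w d := by
      rw [MvPolynomial.coeff_sum]
      rw [Finset.sum_eq_single d]
      · rw [coeff_C_mul, coeff_X_pow]
        simp
      · intro j hj hjd
        rw [coeff_C_mul, coeff_X_pow]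
        rw [if_neg, mul_zero]
        rw [Finsupp.single_eq_single_iff]
        push_neg
        have hj1 := (Finset.mem_Icc.1 hj).1
        exact ⟨fun _ => hjd, fun hj0 => by omega⟩
      · intro h
        exact absurd (Finset.mem_Icc.2 ⟨by omega, le_rfl⟩) h
    have h2 : MvPolynomial.coeff (Finsupp.single (0 : Fin 2) d) (C c) = 0 := by
      rw [MvPolynomial.coeff_C, if_neg]
      intro h
      have : Finsupp.single (0 : Fin 2) d = 0 := h.symm
      rw [Finsupp.single_eq_zero] at this
      omega
    have h3 : MvPolynomial.coeff (Finsupp.single (0 : Fin 2) d) (C z * X 1) = 0 := by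
      rw [coeff_C_mul, coeff_X', if_neg, mul_zero]
      rw [Finsupp.single_eq_single_iff]
      push_neg
      exact ⟨fun h => absurd h (by decide), fun h => absurd h one_ne_zero⟩
    rw [curveP, MvPolynomial.coeff_sub, MvPolynomial.coeff_add, h1, h2, h3]
    simpa using hw

lemma irred_linear (g : MvPolynomial (Fin 1) ℂ) (z : ℂ) (hz : z ≠ 0) :
    Irreducible (Polynomial.C g - Polynomial.C (MvPolynomial.C z) * Polynomial.X) := by
  have h1 : (MvPolynomial.C z⁻¹ : MvPolynomial (Fin 1) ℂ) * MvPolynomial.C z = 1 := by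
    rw [← MvPolynomial.C_mul, inv_mul_cancel₀ hz, MvPolynomial.C_1]
  have h2 : Polynomial.C (MvPolynomial.C z⁻¹ * g) * Polynomial.C (MvPolynomial.C z)
      = Polynomial.C g := by
    rw [← Polynomial.C_mul, mul_comm (MvPolynomial.C z⁻¹) g, mul_assoc, h1, mul_one]
  have heq : Polynomial.C g - Polynomial.C (MvPolynomial.C z) * Polynomial.X
      = (Polynomial.X - Polynomial.C (MvPolynomial.C z⁻¹ * g))
          * (- Polynomial.C (MvPolynomial.C z)) := by
    linear_combination -h2
  rw [heq, irreducible_mul_isUnit]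
  · exact Polynomial.irreducible_X_sub_C _
  · have hu : IsUnit (Polynomial.C (MvPolynomial.C z : MvPolynomial (Fin 1) ℂ)) :=
      ((hz.isUnit).map (MvPolynomial.C : ℂ →+* MvPolynomial (Fin 1) ℂ)).map
        (Polynomial.C : MvPolynomial (Fin 1) ℂ →+* Polynomial (MvPolynomial (Fin 1) ℂ))
    exact hu.neg

lemma curveP_irred (w : ℕ → ℤ) (c z : ℤ) (d : ℕ) (hz : z ≠ 0) :
    Irreducible (MvPolynomial.map (Int.castRingHom ℂ) (curveP w c z d)) := by
  let e : MvPolynomial (Fin 2) ℂ ≃ₐ[ℂ] Polynomial (MvPolynomial (Fin 1) ℂ) :=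
    (renameEquiv ℂ (Equiv.swap (0 : Fin 2) 1)).trans (finSuccEquiv ℂ 1)
  have e0 : e (X 0) = Polynomial.C (MvPolynomial.X 0) := by
    show (finSuccEquiv ℂ 1) (rename (Equiv.swap (0 : Fin 2) 1) (X 0)) = _
    rw [rename_X, Equiv.swap_apply_left]
    have h : (1 : Fin 2) = Fin.succ 0 := rfl
    rw [h, finSuccEquiv_X_succ]
  have e1 : e (X 1) = Polynomial.X := by
    show (finSuccEquiv ℂ 1) (rename (Equiv.swap (0 : Fin 2) 1) (X 1)) = _
    rw [rename_X, Equiv.swap_apply_right, finSuccEquiv_X_zero]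
  have eC : ∀ r : ℂ, e (MvPolynomial.C r) = Polynomial.C (MvPolynomial.C r) := by
    intro r
    show (finSuccEquiv ℂ 1) (rename (Equiv.swap (0 : Fin 2) 1) (MvPolynomial.C r)) = _
    rw [rename_C]
    simp [finSuccEquiv_apply]
  have hQ : e (MvPolynomial.map (Int.castRingHom ℂ) (curveP w c z d))
      = Polynomial.C ((∑ j ∈ Finset.Icc 1 d,
            MvPolynomial.C ((w j : ℂ)) * (MvPolynomial.X 0) ^ j) + MvPolynomial.C ((c : ℂ)))
        - Polynomial.C (MvPolynomial.C ((z : ℂ))) * Polynomial.X := by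
    rw [curveP]
    rw [map_sub, map_add, map_sum]
    simp only [map_mul, map_pow, MvPolynomial.map_C, MvPolynomial.map_X, Int.coe_castRingHom]
    rw [map_sub, map_add, map_sum]
    simp only [map_mul, map_pow, e0, e1, eC]
    rw [map_add, map_sum Polynomial.C]
    simp only [map_mul, map_pow]
  have hz' : (z : ℂ) ≠ 0 := Int.cast_ne_zero.2 hz
  have hirr := irred_linear ((∑ j ∈ Finset.Icc 1 d,
      MvPolynomial.C ((w j : ℂ)) * (MvPolynomial.X 0) ^ j) + MvPolynomial.C ((c : ℂ)))
    ((z : ℂ)) hz'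
  rw [← hQ] at hirr
  exact (MulEquiv.irreducible_iff (e.toRingEquiv.toMulEquiv)).mp hirr

end Aux

set_option maxHeartbeats 1000000 in
/-- Theorem 2 of the paper: assuming the Bombieri–Pila bound for absolutely irreducible
integral plane curves of degree `d`, if `H ≤ q^(2/(d²+d+2))` then the number of points
`(x,y)` in a cube `(K,K+H] × (L,L+H]` with `y ≡ f(x) (mod q)` is at most `H^(1/d+o(1))`,
for `f` of degree `d` with leading coefficient coprime to `q`. -/
theorem points_on_curves_small_boxes
    (d : ℕ) (hd : 2 ≤ d)
    (hBP : ∀ ε : ℝ, 0 < ε → ∃ C : ℝ, 0 < C ∧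
      ∀ P : MvPolynomial (Fin 2) ℤ, P.totalDegree = d →
        Irreducible (MvPolynomial.map (Int.castRingHom ℂ) P) →
        ∀ H : ℝ, 1 ≤ H → ∀ K L : ℤ,
          (Set.ncard {p : ℤ × ℤ |
              MvPolynomial.eval (fun i => if i = 0 then p.1 else p.2) P = 0 ∧
              (K : ℝ) < p.1 ∧ (p.1 : ℝ) ≤ K + H ∧ (L : ℝ) < p.2 ∧ (p.2 : ℝ) ≤ L + H} : ℝ) ≤
            C * H ^ ((1 : ℝ) / d + ε)) :
    ∀ ε : ℝ, 0 < ε → ∃ C : ℝ, 0 < C ∧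
      ∀ (q : ℕ), 0 < q → ∀ a : ℕ → ℤ, Int.gcd (a d) q = 1 →
        ∀ (K L : ℤ) (H : ℝ), 1 ≤ H → H ≤ (q : ℝ) ^ ((2 : ℝ) / ((d : ℝ) ^ 2 + d + 2)) →
          (Set.ncard {p : ℤ × ℤ |
              (K : ℝ) < p.1 ∧ (p.1 : ℝ) ≤ K + H ∧ (L : ℝ) < p.2 ∧ (p.2 : ℝ) ≤ L + H ∧
              p.2 ≡ ∑ i ∈ Finset.range (d + 1), a i * p.1 ^ i [ZMOD (q : ℤ)]} : ℝ) ≤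
            C * H ^ ((1 : ℝ) / d + ε) := by
  intro ε hε
  obtain ⟨C₀, hC₀, hBP'⟩ := hBP ε hε
  refine ⟨(2 * d + 5) * C₀ + 1, by positivity, ?_⟩
  intro q hq a ha K L H hH1 hHq
  set S : Set (ℤ × ℤ) := {p : ℤ × ℤ |
      (K : ℝ) < p.1 ∧ (p.1 : ℝ) ≤ K + H ∧ (L : ℝ) < p.2 ∧ (p.2 : ℝ) ≤ L + H ∧
      p.2 ≡ ∑ i ∈ Finset.range (d + 1), a i * p.1 ^ i [ZMOD (q : ℤ)]} with hSdef
  have hH0 : (0 : ℝ) < H := by linarith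
  have hrε : (0 : ℝ) ≤ (1 : ℝ) / d + ε := by positivity
  have hrpow0 : (0 : ℝ) ≤ H ^ ((1 : ℝ) / d + ε) := Real.rpow_nonneg hH0.le _
  have hrpow1 : (1 : ℝ) ≤ H ^ ((1 : ℝ) / d + ε) := Real.one_le_rpow hH1 hrε
  have hfl1 : 1 ≤ ⌊H⌋ := Int.le_floor.2 (by exact_mod_cast hH1)
  set m : ℕ := ⌊H⌋.toNat with hmdef
  have hmZ : (m : ℤ) = ⌊H⌋ := Int.toNat_of_nonneg (by omega)
  have hm1 : 1 ≤ m := by omega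
  have hmR : (m : ℝ) ≤ H := by
    have := Int.floor_le H
    calc (m : ℝ) = ((m : ℤ) : ℝ) := by push_cast; ring
      _ = ((⌊H⌋ : ℤ) : ℝ) := by rw [hmZ]
      _ ≤ H := this
  by_cases hm : 2 ≤ m
  · -- main case
    -- numeric setup
    obtain ⟨D, hDdef⟩ : ∃ D : ℕ, D = ∑ i ∈ Finset.range d, (i + 1) := ⟨_, rfl⟩
    have h2D : 2 * (D + 1) = d * d + d + 2 := by
      subst hDdef
      have h1 : ∑ i ∈ Finset.range (d + 1), i = ∑ i ∈ Finset.range d, (i + 1) := by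
        rw [Finset.sum_range_succ']
        simp
      have h2 := Finset.sum_range_id_mul_two (d + 1)
      have h3 : (d + 1) * (d + 1 - 1) = d * d + d := by
        rw [Nat.add_sub_cancel]
        ring
      omega
    have hq1R : (1 : ℝ) ≤ (q : ℝ) := by exact_mod_cast hq
    have hsR : ((d : ℝ) ^ 2 + d + 2) = 2 * ((D : ℝ) + 1) := by
      have hcast : ((2 * (D + 1) : ℕ) : ℝ) = ((d * d + d + 2 : ℕ) : ℝ) := by rw [h2D]
      push_cast at hcast
      nlinarith [hcast]
    have hHq' : H ^ ((D : ℝ) + 1) ≤ (q : ℝ) := by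
      have hsne : ((d : ℝ) ^ 2 + d + 2) ≠ 0 := by positivity
      calc H ^ ((D : ℝ) + 1)
          ≤ ((q : ℝ) ^ ((2 : ℝ) / ((d : ℝ) ^ 2 + d + 2))) ^ ((D : ℝ) + 1) :=
            Real.rpow_le_rpow hH0.le hHq (by positivity)
        _ = (q : ℝ) ^ (((2 : ℝ) / ((d : ℝ) ^ 2 + d + 2)) * ((D : ℝ) + 1)) :=
            (Real.rpow_mul (by positivity) _ _).symm
        _ = (q : ℝ) ^ (1 : ℝ) := by
            congr 1
            rw [hsR]
            field_simp
        _ = (q : ℝ) := Real.rpow_one _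
    have hmq : m ^ (D + 1) ≤ q := by
      have hcast : ((m ^ (D + 1) : ℕ) : ℝ) ≤ (q : ℝ) := by
        push_cast
        calc (m : ℝ) ^ (D + 1) ≤ H ^ (D + 1) := by
              apply pow_le_pow_left₀ (by positivity) hmR
          _ = H ^ ((D : ℝ) + 1) := by
              rw [← Real.rpow_natCast H (D + 1)]
              push_cast
              ring_nf
          _ ≤ (q : ℝ) := hHq'
      exact_mod_cast hcast
    -- the recentered coefficients
    set b : ℕ → ℤ := fun j =>
      ∑ i ∈ Finset.range (d + 1), if j ≤ i then a i * (i.choose j) * K ^ (i - j) else 0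
      with hbdef
    have hbd : b d = a d := by
      simp only [hbdef]
      rw [Finset.sum_eq_single d]
      · simp
      · intro i hi hid
        have : ¬ d ≤ i := by
          have := Finset.mem_range.1 hi
          omega
        simp [this]
      · intro h
        exact absurd (Finset.mem_range.2 (by omega)) h
    rw [hDdef] at hmq
    obtain ⟨z, hz0, hzm, w, hw⟩ := aux_pigeon q m d hm b hmq
    have hqZ : (0 : ℤ) < (q : ℤ) := by exact_mod_cast hq
    have hzq : z < (q : ℤ) := by
      have h2z : z * 2 ≤ z * m := by
        apply mul_le_mul_of_nonneg_left (by exact_mod_cast hm) hz0.le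
      omega
    have hwd : w d ≠ 0 := by
      intro h0
      have hmem : d ∈ Finset.Icc 1 d := Finset.mem_Icc.2 ⟨by omega, le_rfl⟩
      have hmod := (hw d hmem).1
      rw [h0, hbd] at hmod
      have hdvd : (q : ℤ) ∣ z * a d := by simpa using hmod.dvd
      have hco : IsCoprime ((q : ℤ)) (a d) := by
        rw [Int.isCoprime_iff_gcd_eq_one, Int.gcd_comm]
        exact ha
      have hzdvd : (q : ℤ) ∣ z := hco.dvd_of_dvd_mul_right hdvd
      have := Int.le_of_dvd hz0 hzdvd
      omega
    set c0 : ℤ := (z * (b 0 - L)) % (q : ℤ) with hc0def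
    have hc00 : 0 ≤ c0 := Int.emod_nonneg _ (by omega)
    have hc0q : c0 < q := Int.emod_lt_of_pos _ hqZ
    set T : Finset ℤ := Finset.Icc (-(d : ℤ) - 2) ((d : ℤ) + 2) with hTdef
    set A : ℤ → Set (ℤ × ℤ) := fun t => {p : ℤ × ℤ |
        MvPolynomial.eval (fun i => if i = 0 then p.1 else p.2)
          (curveP w (c0 + t * q) z d) = 0 ∧
        (((0 : ℤ) : ℝ) < p.1 ∧ (p.1 : ℝ) ≤ ((0 : ℤ) : ℝ) + H ∧
          ((0 : ℤ) : ℝ) < p.2 ∧ (p.2 : ℝ) ≤ ((0 : ℤ) : ℝ) + H)} with hAdef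
    have hA : ∀ t : ℤ, (Set.ncard (A t) : ℝ) ≤ C₀ * H ^ ((1 : ℝ) / d + ε) := by
      intro t
      have := hBP' (curveP w (c0 + t * q) z d)
        (curveP_totalDegree w (c0 + t * q) z d hd hwd)
        (curveP_irred w (c0 + t * q) z d (ne_of_gt hz0)) H hH1 0 0
      exact this
    have hAfin : ∀ t : ℤ, (A t).Finite := by
      intro t
      apply Set.Finite.subset
        ((Finset.Icc (1 : ℤ) m ×ˢ Finset.Icc (1 : ℤ) m) : Finset (ℤ × ℤ)).finite_toSet
      intro p hp
      obtain ⟨-, h1, h2, h3, h4⟩ := hp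
      simp only [Finset.coe_product, Set.mem_prod, Finset.mem_coe, Finset.mem_Icc]
      constructor
      · constructor
        · have : (0 : ℝ) < (p.1 : ℝ) := by push_cast at h1 ⊢; linarith
          exact_mod_cast this
        · have : (p.1 : ℝ) ≤ H := by push_cast at h2 ⊢; linarith
          have := Int.le_floor.2 this
          omega
      · constructor
        · have : (0 : ℝ) < (p.2 : ℝ) := by push_cast at h3 ⊢; linarith
          exact_mod_cast this
        · have : (p.2 : ℝ) ≤ H := by push_cast at h4 ⊢; linarith
          have := Int.le_floor.2 this
          omega
    set σ : ℤ × ℤ → ℤ × ℤ := fun p => (p.1 - K, p.2 - L) with hσdef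
    have hσinj : Function.Injective σ := by
      intro p1 p2 h
      rw [hσdef] at h
      simp only [Prod.mk.injEq] at h
      have := h.1
      have := h.2
      ext <;> omega
    have hsub : σ '' S ⊆ ⋃ t ∈ T, A t := by
      rintro _ ⟨p, hp, rfl⟩
      obtain ⟨hb1, hb2, hb3, hb4, hmod⟩ := hp
      set u : ℤ := p.1 - K with hudef
      set v : ℤ := p.2 - L with hvdef
      have hu1 : 1 ≤ u := by
        have : K < p.1 := by exact_mod_cast hb1
        omega
      have hum : u ≤ (m : ℤ) := by
        have : (p.1 - K : ℝ) ≤ H := by push_cast; linarith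
        have h2 : ((p.1 - K : ℤ) : ℝ) ≤ H := by push_cast; linarith
        have := Int.le_floor.2 h2
        omega
      have hv1 : 1 ≤ v := by
        have : L < p.2 := by exact_mod_cast hb3
        omega
      have hvm : v ≤ (m : ℤ) := by
        have h2 : ((p.2 - L : ℤ) : ℝ) ≤ H := by push_cast; linarith
        have := Int.le_floor.2 h2
        omega
      set SB : ℤ := ∑ j ∈ Finset.Icc 1 d, b j * u ^ j with hSBdef
      set SW : ℤ := ∑ j ∈ Finset.Icc 1 d, w j * u ^ j with hSWdef
      have hexp : ∑ i ∈ Finset.range (d + 1), a i * p.1 ^ i = b 0 + SB := by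
        have hKu : p.1 = K + u := by omega
        rw [hKu, aux_recenter a (d + 1) K u]
        have hIcc : SB = ∑ i ∈ Finset.range d, b (i + 1) * u ^ (i + 1) := by
          rw [hSBdef, ← Finset.Ico_add_one_right_eq_Icc, Finset.sum_Ico_eq_sum_range]
          try simp only [Nat.add_sub_cancel]
          exact Finset.sum_congr rfl fun i _ => by rw [add_comm 1 i]
        rw [Finset.sum_range_succ', hIcc]
        simp only [pow_zero, mul_one]
        simp only [hbdef]
        ring
      have hdvd1 : (q : ℤ) ∣ z * (p.2 - (b 0 + SB)) := by
        have h1 : (q : ℤ) ∣ (∑ i ∈ Finset.range (d + 1), a i * p.1 ^ i) - p.2 := hmod.dvd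
        rw [hexp] at h1
        have h2 := h1.mul_left z
        have h3 : z * ((b 0 + SB) - p.2) = -(z * (p.2 - (b 0 + SB))) := by ring
        rw [h3] at h2
        exact dvd_neg.1 h2
      have hdvd2 : (q : ℤ) ∣ z * (b 0 - L) - c0 := by
        refine ⟨z * (b 0 - L) / q, ?_⟩
        rw [hc0def, Int.emod_def]
        ring
      have hdvd3 : (q : ℤ) ∣ ∑ j ∈ Finset.Icc 1 d, (z * b j - w j) * u ^ j :=
        Finset.dvd_sum fun j hj => ((hw j hj).1.dvd).mul_right _
      have hsum_eq : ∑ j ∈ Finset.Icc 1 d, (z * b j - w j) * u ^ j = z * SB - SW := by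
        rw [hSBdef, hSWdef, Finset.mul_sum, ← Finset.sum_sub_distrib]
        exact Finset.sum_congr rfl fun j _ => by ring
      set num : ℤ := z * v - c0 - SW with hnumdef
      have hnum : (q : ℤ) ∣ num := by
        have hkey : num = z * (p.2 - (b 0 + SB)) + (z * (b 0 - L) - c0) + (z * SB - SW) := by
          rw [hnumdef, hvdef]
          ring
        rw [hkey, ← hsum_eq]
        exact dvd_add (dvd_add hdvd1 hdvd2) hdvd3
      set t : ℤ := num / q with htdef
      have ht : (q : ℤ) * t = num := Int.mul_ediv_cancel' hnum
      have hzv : |z * v| ≤ (q : ℤ) := by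
        rw [abs_of_nonneg (mul_nonneg hz0.le (by omega))]
        calc z * v ≤ z * m := mul_le_mul_of_nonneg_left hvm hz0.le
          _ ≤ q := hzm
      have hSWb : |SW| ≤ (d : ℤ) * q := by
        calc |SW| ≤ ∑ j ∈ Finset.Icc 1 d, |w j * u ^ j| := Finset.abs_sum_le_sum_abs _ _
          _ ≤ ∑ _j ∈ Finset.Icc 1 d, (q : ℤ) := by
              apply Finset.sum_le_sum
              intro j hj
              rw [abs_mul, abs_pow, abs_of_nonneg (by omega : (0 : ℤ) ≤ u)]
              calc |w j| * u ^ j ≤ |w j| * (m : ℤ) ^ j := by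
                    apply mul_le_mul_of_nonneg_left (pow_le_pow_left₀ (by omega) hum j)
                      (abs_nonneg _)
                _ ≤ q := ((hw j hj).2).le
          _ = (d : ℤ) * q := by
              rw [Finset.sum_const, Nat.card_Icc]
              simp [nsmul_eq_mul]
      have hnumb : |num| ≤ ((d : ℤ) + 2) * q := by
        have h1 := abs_le.1 hzv
        have h3 := abs_le.1 hSWb
        have hexpand : ((d : ℤ) + 2) * q = (d : ℤ) * q + 2 * q := by ring
        rw [abs_le]
        constructor
        · rw [hnumdef]; linarith
        · rw [hnumdef]; linarith
      have htb : |t| ≤ (d : ℤ) + 2 := by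
        have h1 : (q : ℤ) * |t| = |num| := by
          rw [← ht, abs_mul, abs_of_nonneg hqZ.le]
        have h2 : (q : ℤ) * |t| ≤ (q : ℤ) * ((d : ℤ) + 2) := by
          rw [h1]
          calc |num| ≤ ((d : ℤ) + 2) * q := hnumb
            _ = (q : ℤ) * ((d : ℤ) + 2) := by ring
        exact le_of_mul_le_mul_left h2 hqZ
      have htT : t ∈ T := by
        rw [hTdef, Finset.mem_Icc]
        have := abs_le.1 htb
        omega
      apply Set.mem_biUnion htT
      rw [hAdef]
      show MvPolynomial.eval (fun i => if i = 0 then u else v)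
          (curveP w (c0 + t * q) z d) = 0 ∧ _
      refine ⟨?_, ?_, ?_, ?_, ?_⟩
      · rw [curveP_eval]
        have : (q : ℤ) * t = z * v - c0 - SW := by rw [ht, hnumdef]
        rw [← hSWdef]
        linarith
      · have : (0 : ℝ) < (u : ℝ) := by exact_mod_cast hu1.trans_lt' (by norm_num)
        push_cast
        linarith [this]
      · have : (u : ℝ) ≤ (m : ℝ) := by exact_mod_cast hum
        push_cast
        linarith [hmR]
      · have : (0 : ℝ) < (v : ℝ) := by exact_mod_cast hv1.trans_lt' (by norm_num)
        push_cast
        linarith [this]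
      · have : (v : ℝ) ≤ (m : ℝ) := by exact_mod_cast hvm
        push_cast
        linarith [hmR]
    -- counting
    have hfinU : (⋃ t ∈ T, A t).Finite :=
      Set.Finite.biUnion T.finite_toSet (fun t _ => hAfin t)
    have h1 : S.ncard = (σ '' S).ncard := (Set.ncard_image_of_injective S hσinj).symm
    have h2 : (σ '' S).ncard ≤ (⋃ t ∈ T, A t).ncard := Set.ncard_le_ncard hsub hfinU
    have h3 := aux_ncard_biUnion_le T A
    have hTcard : T.card = 2 * d + 5 := by
      rw [hTdef, Int.card_Icc]
      omega
    calc (S.ncard : ℝ) ≤ ((∑ t ∈ T, (A t).ncard : ℕ) : ℝ) := by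
          exact_mod_cast (h1 ▸ le_trans h2 h3)
      _ = ∑ t ∈ T, ((A t).ncard : ℝ) := by push_cast; ring
      _ ≤ ∑ _t ∈ T, C₀ * H ^ ((1 : ℝ) / d + ε) := Finset.sum_le_sum fun t _ => hA t
      _ = (T.card : ℝ) * (C₀ * H ^ ((1 : ℝ) / d + ε)) := by
          rw [Finset.sum_const, nsmul_eq_mul]
      _ = ((2 * d + 5 : ℕ) : ℝ) * (C₀ * H ^ ((1 : ℝ) / d + ε)) := by rw [hTcard]
      _ ≤ ((2 * d + 5) * C₀ + 1) * H ^ ((1 : ℝ) / d + ε) := by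
          push_cast
          nlinarith [hrpow0]
  · -- small case: ⌊H⌋ = 1
    have hfl : ⌊H⌋ = 1 := by omega
    have hsub1 : S ⊆ {((K + 1 : ℤ), (L + 1 : ℤ))} := by
      intro p hp
      obtain ⟨hb1, hb2, hb3, hb4, -⟩ := hp
      have h1 : K < p.1 := by exact_mod_cast hb1
      have h2 : p.1 - K ≤ ⌊H⌋ := Int.le_floor.2 (by push_cast; linarith)
      have h3 : L < p.2 := by exact_mod_cast hb3
      have h4 : p.2 - L ≤ ⌊H⌋ := Int.le_floor.2 (by push_cast; linarith)
      simp only [Set.mem_singleton_iff]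
      ext <;> simp <;> omega
    have hle1 : S.ncard ≤ 1 := by
      have := Set.ncard_le_ncard hsub1 (Set.finite_singleton _)
      simpa using this
    have hC1 : (1 : ℝ) ≤ (2 * d + 5) * C₀ + 1 := by
      have h0 : (0 : ℝ) ≤ (2 * d + 5) * C₀ := by positivity
      linarith
    calc (S.ncard : ℝ) ≤ 1 := by exact_mod_cast hle1
      _ ≤ ((2 * d + 5) * C₀ + 1) * H ^ ((1 : ℝ) / d + ε) := by nlinarith
end

section
/- Let q be a positive integer, a₀,…,a_d integers with gcd(a_d, q) = 1, and suppose there exist integers n, z, w₁, …, w_d with n ≡ z (mod q), a_i n ≡ w_i (mod q) for 1 ≤ i ≤ d, and 0 < max(|z|, |w₁|, …, |w_d|) (the vector is nonzero) with |z| ≤ q/H and |w_i| ≤ q/H^i. Then w_d ≠ 0, and every integer solution (x, y) of y ≡ a₀ + a₁x + ⋯ + a_d x^d (mod q) satisfies z·y = w₀ + w₁x + ⋯ + w_d x^d + t·q for some integer t, where w₀ is the least residue of a₀n modulo q. Moreover, if 1 ≤ x, y ≤ H, the number of possible values of t is O_d(1). -/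
/-- Lifting the congruence to an integral equation via a short multiplier vector:
`w_d ≠ 0`, every solution of `y ≡ f(x) (mod q)` satisfies
`z·y = w₀ + w₁x + ⋯ + w_d x^d + t·q`, and for `1 ≤ x, y ≤ H` the number of possible
values of `t` is `O_d(1)`. -/
theorem lift_congruence_to_integral_curve (d : ℕ) (hd : 1 ≤ d) :
    ∃ C : ℝ, 0 < C ∧
      ∀ (q : ℕ), 0 < q → ∀ (H : ℝ), 1 < H → ∀ (a : ℕ → ℤ), Int.gcd (a d) q = 1 →
      ∀ (n z w₀ : ℤ) (w : ℕ → ℤ),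
        n ≡ z [ZMOD (q : ℤ)] →
        (∀ i, 1 ≤ i → i ≤ d → a i * n ≡ w i [ZMOD (q : ℤ)]) →
        ¬(z = 0 ∧ ∀ i, 1 ≤ i → i ≤ d → w i = 0) →
        |(z : ℝ)| ≤ (q : ℝ) / H →
        (∀ i, 1 ≤ i → i ≤ d → |(w i : ℝ)| ≤ (q : ℝ) / H ^ i) →
        w₀ ≡ a 0 * n [ZMOD (q : ℤ)] → 0 ≤ w₀ → w₀ < q →
        w d ≠ 0 ∧
        (∀ x y : ℤ,
          y ≡ ∑ i ∈ Finset.range (d + 1), a i * x ^ i [ZMOD (q : ℤ)] →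
          ∃ t : ℤ, z * y = w₀ + (∑ i ∈ Finset.Icc 1 d, w i * x ^ i) + t * q) ∧
        (Set.ncard {t : ℤ | ∃ x y : ℤ, 1 ≤ x ∧ (x : ℝ) ≤ H ∧ 1 ≤ y ∧ (y : ℝ) ≤ H ∧
            y ≡ ∑ i ∈ Finset.range (d + 1), a i * x ^ i [ZMOD (q : ℤ)] ∧
            z * y = w₀ + (∑ i ∈ Finset.Icc 1 d, w i * x ^ i) + t * q} : ℝ) ≤ C := by
  refine ⟨2 * d + 5, by positivity, ?_⟩
  intro q hq H hH a hgcd n z w₀ w hnz hw hnontriv hzb hwb hw0 hw0nn hw0lt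
  have hqZ : (0:ℤ) < (q:ℤ) := by exact_mod_cast hq
  have hqR : (0:ℝ) < (q:ℝ) := by exact_mod_cast hq
  have hH0 : (0:ℝ) < H := by linarith
  -- a helper : divisible and small implies zero
  have key : ∀ m : ℤ, (q:ℤ) ∣ m → |(m:ℝ)| < (q:ℝ) → m = 0 := by
    intro m hdvd hb
    have : |m| < (q:ℤ) := by exact_mod_cast (by push_cast at hb ⊢; exact hb : |(m:ℝ)| < (q:ℝ))
    exact Int.eq_zero_of_abs_lt_dvd hdvd this
  -- Part 1 : w d ≠ 0
  have hwd : w d ≠ 0 := by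
    intro h0
    apply hnontriv
    have hcop : IsCoprime ((q:ℤ)) (a d) :=
      (Int.isCoprime_iff_gcd_eq_one.mpr hgcd).symm
    have hdvdan : (q:ℤ) ∣ a d * n := by
      have h1 := (hw d hd le_rfl).dvd
      rw [h0] at h1
      simpa using h1
    have hdn : (q:ℤ) ∣ n := hcop.dvd_of_dvd_mul_left hdvdan
    have hdz : (q:ℤ) ∣ z := by
      have := hnz.dvd
      have : (q:ℤ) ∣ (z - n) + n := dvd_add this hdn
      simpa using this
    constructor
    · exact key z hdz (lt_of_le_of_lt hzb (div_lt_self hqR hH))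
    · intro i hi1 hi2
      have hdwi : (q:ℤ) ∣ w i := by
        have h1 := (hw i hi1 hi2).dvd
        have : (q:ℤ) ∣ (w i - a i * n) + a i * n := dvd_add h1 (Dvd.dvd.mul_left hdn (a i))
        simpa using this
      refine key _ hdwi (lt_of_le_of_lt (hwb i hi1 hi2) ?_)
      exact div_lt_self hqR (one_lt_pow₀ hH (by omega))
  -- Part 2 : divisibility
  have hsplit : Finset.range (d+1) = insert 0 (Finset.Icc 1 d) := by
    ext i; simp only [Finset.mem_range, Finset.mem_insert, Finset.mem_Icc]; omega
  have hsol : ∀ x y : ℤ, y ≡ (∑ i ∈ Finset.range (d+1), a i * x ^ i) [ZMOD (q:ℤ)] →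
      (q:ℤ) ∣ z * y - (w₀ + ∑ i ∈ Finset.Icc 1 d, w i * x ^ i) := by
    intro x y hxy
    have e1 : (q:ℤ) ∣ (z - n) * y := (hnz.dvd).mul_right y
    have e2 : (q:ℤ) ∣ n * ((∑ i ∈ Finset.range (d+1), a i * x ^ i) - y) :=
      (hxy.dvd).mul_left n
    have e3 : (q:ℤ) ∣ a 0 * n - w₀ := hw0.dvd
    have e4 : (q:ℤ) ∣ ∑ i ∈ Finset.Icc 1 d, (a i * n - w i) * x ^ i := by
      refine Finset.dvd_sum fun i hi => ?_
      obtain ⟨h1, h2⟩ := Finset.mem_Icc.mp hi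
      exact ((hw i h1 h2).symm.dvd).mul_right _
    have hF : n * (∑ i ∈ Finset.range (d+1), a i * x ^ i)
        = a 0 * n + ∑ i ∈ Finset.Icc 1 d, (a i * n) * x ^ i := by
      rw [hsplit, Finset.sum_insert (by simp), mul_add, Finset.mul_sum, pow_zero, mul_one]
      congr 1
      · ring
      · exact Finset.sum_congr rfl fun i _ => by ring
    have hsub : ∑ i ∈ Finset.Icc 1 d, (a i * n - w i) * x ^ i
        = (∑ i ∈ Finset.Icc 1 d, (a i * n) * x ^ i) - ∑ i ∈ Finset.Icc 1 d, w i * x ^ i := by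
      rw [← Finset.sum_sub_distrib]
      exact Finset.sum_congr rfl fun i _ => by ring
    have heq : z * y - (w₀ + ∑ i ∈ Finset.Icc 1 d, w i * x ^ i)
        = (z - n) * y - n * ((∑ i ∈ Finset.range (d+1), a i * x ^ i) - y)
          + ((a 0 * n - w₀) + ∑ i ∈ Finset.Icc 1 d, (a i * n - w i) * x ^ i) := by
      rw [hsub]
      linear_combination hF
    rw [heq]
    exact dvd_add (dvd_sub e1 e2) (dvd_add e3 e4)
  refine ⟨hwd, ?_, ?_⟩
  · intro x y hxy
    obtain ⟨t, ht⟩ := hsol x y hxy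
    exact ⟨t, by linarith [ht, mul_comm t ((q:ℤ))]⟩
  -- Part 3 : counting
  · have hsubset : {t : ℤ | ∃ x y : ℤ, 1 ≤ x ∧ (x : ℝ) ≤ H ∧ 1 ≤ y ∧ (y : ℝ) ≤ H ∧
        y ≡ ∑ i ∈ Finset.range (d + 1), a i * x ^ i [ZMOD (q : ℤ)] ∧
        z * y = w₀ + (∑ i ∈ Finset.Icc 1 d, w i * x ^ i) + t * q}
        ⊆ ↑(Finset.Icc (-(d:ℤ)-2) ((d:ℤ)+2)) := by
      rintro t ⟨x, y, hx1, hxH, hy1, hyH, hxy, ht⟩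
      simp only [Finset.coe_Icc, Set.mem_Icc]
      have hxb : |(x:ℝ)| ≤ H := by
        rw [abs_of_nonneg (by exact_mod_cast (by omega : (0:ℤ) ≤ x))]; exact hxH
      have hyb : |(y:ℝ)| ≤ H := by
        rw [abs_of_nonneg (by exact_mod_cast (by omega : (0:ℤ) ≤ y))]; exact hyH
      -- over ℝ
      have htR : (t:ℝ) * q = z * y - w₀ - ∑ i ∈ Finset.Icc 1 d, (w i : ℝ) * (x:ℝ) ^ i := by
        have := ht
        have : ((z * y : ℤ) : ℝ) = ((w₀ + (∑ i ∈ Finset.Icc 1 d, w i * x ^ i) + t * q : ℤ) : ℝ) := by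
          exact_mod_cast congrArg (Int.cast : ℤ → ℝ) this
        push_cast at this
        linarith
      have hzy : |(z:ℝ) * y| ≤ (q:ℝ) := by
        calc |(z:ℝ) * y| = |(z:ℝ)| * |(y:ℝ)| := abs_mul _ _
          _ ≤ ((q:ℝ)/H) * H := by
              apply mul_le_mul hzb hyb (abs_nonneg _) (by positivity)
          _ = q := div_mul_cancel₀ _ (ne_of_gt hH0)
      have hw0b : |(w₀:ℝ)| ≤ (q:ℝ) := by
        rw [abs_of_nonneg (by exact_mod_cast hw0nn)]
        exact_mod_cast hw0lt.le
      have hSb : |∑ i ∈ Finset.Icc 1 d, (w i : ℝ) * (x:ℝ) ^ i| ≤ d * q := by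
        calc |∑ i ∈ Finset.Icc 1 d, (w i : ℝ) * (x:ℝ) ^ i|
            ≤ ∑ i ∈ Finset.Icc 1 d, |(w i : ℝ) * (x:ℝ) ^ i| := Finset.abs_sum_le_sum_abs _ _
          _ ≤ ∑ i ∈ Finset.Icc 1 d, (q:ℝ) := by
              refine Finset.sum_le_sum fun i hi => ?_
              obtain ⟨h1, h2⟩ := Finset.mem_Icc.mp hi
              rw [abs_mul, abs_pow]
              calc |(w i : ℝ)| * |(x:ℝ)| ^ i ≤ ((q:ℝ)/H^i) * H^i := by
                    apply mul_le_mul (hwb i h1 h2) (pow_le_pow_left₀ (abs_nonneg _) hxb i)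
                      (by positivity) (by positivity)
                _ = q := div_mul_cancel₀ _ (by positivity)
          _ = d * q := by
              rw [Finset.sum_const, Nat.card_Icc]
              simp [nsmul_eq_mul]
      have htb : |(t:ℝ)| * q ≤ ((d:ℝ) + 2) * q := by
        calc |(t:ℝ)| * q = |(t:ℝ) * q| := by
              rw [abs_mul, abs_of_nonneg hqR.le]
          _ = |(z:ℝ) * y - w₀ - ∑ i ∈ Finset.Icc 1 d, (w i : ℝ) * (x:ℝ) ^ i| := by rw [htR]
          _ ≤ |(z:ℝ) * y| + |(w₀:ℝ)| + |∑ i ∈ Finset.Icc 1 d, (w i : ℝ) * (x:ℝ) ^ i| := by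
              have := abs_sub (((z:ℝ) * y) - w₀) (∑ i ∈ Finset.Icc 1 d, (w i : ℝ) * (x:ℝ) ^ i)
              have h2 := abs_sub ((z:ℝ) * y) ((w₀:ℝ))
              calc |(z:ℝ) * y - w₀ - ∑ i ∈ Finset.Icc 1 d, (w i : ℝ) * (x:ℝ) ^ i|
                  ≤ |(z:ℝ) * y - w₀| + |∑ i ∈ Finset.Icc 1 d, (w i : ℝ) * (x:ℝ) ^ i| :=
                    abs_sub _ _
                _ ≤ |(z:ℝ) * y| + |(w₀:ℝ)| + |∑ i ∈ Finset.Icc 1 d, (w i : ℝ) * (x:ℝ) ^ i| := by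
                    linarith [abs_sub ((z:ℝ) * y) ((w₀:ℝ))]
          _ ≤ (q:ℝ) + (q:ℝ) + (d:ℝ) * q := by linarith
          _ = ((d:ℝ) + 2) * q := by ring
      have htb2 : |(t:ℝ)| ≤ (d:ℝ) + 2 := le_of_mul_le_mul_right (by linarith) hqR
      have : |t| ≤ (d:ℤ) + 2 := by exact_mod_cast (by push_cast; exact htb2 : |(t:ℝ)| ≤ ((d:ℤ):ℝ) + 2)
      constructor <;> [linarith [neg_abs_le t]; linarith [le_abs_self t]]
    have hfin := Set.ncard_le_ncard hsubset (Finset.finite_toSet _)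
    rw [Set.ncard_coe_finset] at hfin
    have hcard : (Finset.Icc (-(d:ℤ)-2) ((d:ℤ)+2)).card = 2 * d + 5 := by
      rw [Int.card_Icc]
      omega
    rw [hcard] at hfin
    calc (Set.ncard _ : ℝ) ≤ ((2 * d + 5 : ℕ) : ℝ) := by exact_mod_cast hfin
      _ = 2 * (d:ℝ) + 5 := by push_cast; ring
end
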